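/- arXiv:2510.06748 — 3 statements merged into one kernel-verified Lean document; each statement's English description precedes it below -/
import Mathlib

section
/- Let θ ∈ S, let C ∈ (θ, ∞] be such that b := sup(S ∩ [θ, C)) is finite, and set δ := Leb₁([θ, b) \ S). If (b − θ)/m < w − δ·𝟙[m ≥ 2], then ℙ(R_𝔗 < b) ≤ (b − θ)/(m·w) + (δ/w)·𝟙[m ≥ 2]; in particular ℙ(R_𝔗 ≥ b) ≥ 1 − (b − θ)/(m·w) − (δ/w)·𝟙[m ≥ 2] > 0. -/
open MeasureTheory ProbabilityTheory Set
open scoped ENNReal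

/-- The right stepping-out points `R_i := θ − u + i·w`. -/
def Rpt (θ u w : ℝ) (i : ℕ) : ℝ := θ - u + i * w

/-- The stopping time `T := inf{i ≥ 1 : R_i ∉ S}`, with `inf ∅ := ∞`, valued in `ℕ∞`. -/
noncomputable def exitTop (S : Set ℝ) (θ u w : ℝ) : ℕ∞ :=
  sInf ((fun i : ℕ => (i : ℕ∞)) '' {i : ℕ | 1 ≤ i ∧ Rpt θ u w i ∉ S})

/-- `R_𝔗` where `𝔗 := min(T, m + 1 − j)` (finite since `m + 1 − j ≤ m`). -/
noncomputable def Rstop (S : Set ℝ) (θ u w : ℝ) (m j : ℕ) : ℝ :=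
  Rpt θ u w (min (exitTop S θ u w) ((m + 1 - j : ℕ) : ℕ∞)).toNat

lemma keyIncl {S : Set ℝ} {θ u w b : ℝ} (hw : 0 < w) (hu : u ∈ Ioo 0 w)
    {m j : ℕ} (hj1 : 1 ≤ j) (hj2 : j ≤ m)
    (h : Rstop S θ u w m j < b) :
    θ - u + ((m + 1 - j : ℕ) : ℝ) * w < b ∨
      ∃ i ∈ Finset.Icc 1 (m - 1), θ - u + (i : ℝ) * w ∈ Ico θ b \ S := by
  set k : ℕ := m + 1 - j with hk
  set A : Set ℕ := {i : ℕ | 1 ≤ i ∧ Rpt θ u w i ∉ S} with hA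
  by_cases hTk : (k : ℕ∞) ≤ exitTop S θ u w
  · left
    have hmin : min (exitTop S θ u w) (k : ℕ∞) = (k : ℕ∞) := min_eq_right hTk
    have hR : Rstop S θ u w m j = θ - u + (k : ℝ) * w := by
      rw [Rstop, hmin]; simp [Rpt]
    rwa [hR] at h
  · right
    push_neg at hTk
    have hAne : A.Nonempty := by
      by_contra hAe
      rw [Set.not_nonempty_iff_eq_empty] at hAe
      have hT : exitTop S θ u w = ⊤ := by
        rw [exitTop, ← hA, hAe]; simp
      rw [hT] at hTk
      exact (not_top_lt hTk)
    set t := sInf A with ht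
    have htA : t ∈ A := Nat.sInf_mem hAne
    have hTe : exitTop S θ u w = (t : ℕ∞) := by
      apply le_antisymm
      · exact sInf_le ⟨t, htA, rfl⟩
      · refine le_sInf ?_
        rintro _ ⟨i, hi, rfl⟩
        simp only []
        exact_mod_cast Nat.sInf_le hi
    rw [hTe] at hTk
    have htk : t < k := by exact_mod_cast hTk
    have hmin : min (exitTop S θ u w) (k : ℕ∞) = (t : ℕ∞) := by
      rw [hTe]; exact min_eq_left (by exact_mod_cast htk.le)
    have hR : Rstop S θ u w m j = θ - u + (t : ℝ) * w := by
      rw [Rstop, hmin]; simp [Rpt]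
    refine ⟨t, ?_, ⟨⟨?_, ?_⟩, ?_⟩⟩
    · simp only [Finset.mem_Icc]
      exact ⟨htA.1, by omega⟩
    · have h1 : (1 : ℝ) ≤ t := by exact_mod_cast htA.1
      nlinarith [hu.2, hu.1]
    · rwa [hR] at h
    · have := htA.2
      simpa [Rpt] using this

/-- Stepping-out bound: for `Υ` uniform on `(0, w)`, `J` uniform on `{1, …, m}`
independent of `Υ`, `θ ∈ S`, `C ∈ (θ, ∞]` with `b := sup(S ∩ [θ, C))` finite and
`δ := Leb₁([θ, b) \ S)`, if `(b − θ)/m < w − δ·𝟙[m ≥ 2]` then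
`ℙ(R_𝔗 < b) ≤ (b − θ)/(m·w) + (δ/w)·𝟙[m ≥ 2]`; in particular
`ℙ(R_𝔗 ≥ b) ≥ 1 − (b − θ)/(m·w) − (δ/w)·𝟙[m ≥ 2] > 0`. -/
theorem stmt1 {Ω : Type*} [MeasurableSpace Ω] (P : Measure Ω) [IsProbabilityMeasure P]
    (w : ℝ) (hw : 0 < w) (S : Set ℝ) (hSmeas : MeasurableSet S)
    (Υ : Ω → ℝ) (hΥmeas : Measurable Υ)
    (hΥ : Measure.map Υ P = (ENNReal.ofReal w)⁻¹ • volume.restrict (Ioo 0 w))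
    (m : ℕ) (hm : 1 ≤ m) (J : Ω → ℕ) (hJmeas : Measurable J)
    (hJ : Measure.map J P = (m : ℝ≥0∞)⁻¹ • ∑ j ∈ Finset.Icc 1 m, Measure.dirac j)
    (hindep : IndepFun Υ J P)
    (θ : ℝ) (hθ : θ ∈ S) (C : EReal) (hC : (θ : EReal) < C)
    (hbfin : BddAbove (S ∩ {x : ℝ | θ ≤ x ∧ (x : EReal) < C}))
    (b : ℝ) (hb : b = sSup (S ∩ {x : ℝ | θ ≤ x ∧ (x : EReal) < C}))
    (δ : ℝ) (hδ : δ = (volume (Ico θ b \ S)).toReal)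
    (hcond : (b - θ) / m < w - δ * (if 2 ≤ m then 1 else 0)) :
    P {ω | Rstop S θ (Υ ω) w m (J ω) < b}
        ≤ ENNReal.ofReal ((b - θ) / (m * w) + (δ / w) * (if 2 ≤ m then 1 else 0)) ∧
    ENNReal.ofReal (1 - (b - θ) / (m * w) - (δ / w) * (if 2 ≤ m then 1 else 0))
        ≤ P {ω | b ≤ Rstop S θ (Υ ω) w m (J ω)} ∧
    0 < 1 - (b - θ) / (m * w) - (δ / w) * (if 2 ≤ m then 1 else 0) := by
  classical
  set ind : ℝ := (if 2 ≤ m then (1:ℝ) else 0) with hinddef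
  have hind0 : 0 ≤ ind := by rw [hinddef]; split <;> norm_num
  have hθb : θ ≤ b := by
    rw [hb]; exact le_csSup hbfin ⟨hθ, le_refl θ, hC⟩
  have hδ0 : 0 ≤ δ := by rw [hδ]; exact ENNReal.toReal_nonneg
  have hm0R : (0:ℝ) < m := by exact_mod_cast hm
  have hm0 : (m : ℝ≥0∞) ≠ 0 := Nat.cast_ne_zero.mpr (by omega)
  have hmtop : (m : ℝ≥0∞) ≠ ⊤ := ENNReal.natCast_ne_top m
  -- the third claim
  have h3 : 0 < 1 - (b - θ) / (m * w) - (δ / w) * ind := by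
    have heq : (b - θ) / (m * w) + (δ / w) * ind = ((b - θ) / m + δ * ind) / w := by
      field_simp
    have hlt : ((b - θ) / m + δ * ind) / w < 1 := by
      rw [div_lt_one hw]; linarith
    have h4 : (b - θ) / (m * w) + (δ / w) * ind < 1 := by rw [heq]; exact hlt
    linarith
  set A : Set ℝ := Ico θ b \ S with hAdef
  have hAm : MeasurableSet A := measurableSet_Ico.diff hSmeas
  have hAfin : volume A ≠ ⊤ := by
    refine ne_top_of_le_ne_top ?_ (measure_mono diff_subset)
    rw [Real.volume_Ico]
    exact ENNReal.ofReal_ne_top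
  have hvolA : volume A = ENNReal.ofReal δ := by
    rw [hδ, ENNReal.ofReal_toReal hAfin]
  -- the exceptional sets
  set E2 : Set ℝ := ⋃ i ∈ Finset.Icc 1 (m-1), (fun u : ℝ => θ + (i:ℝ)*w - u) ⁻¹' A with hE2def
  have hE2m : MeasurableSet E2 := by
    refine MeasurableSet.biUnion (Finset.Icc 1 (m-1) : Finset ℕ).countable_toSet
      (fun i _ => hAm.preimage (measurable_id.const_sub _))
  set B : ℕ → Set ℝ := fun j =>
      ({u : ℝ | θ - u + ((m+1-j:ℕ):ℝ)*w < b} ∪ E2) ∪ (Ioo (0:ℝ) w)ᶜ with hBdef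
  have hBm : ∀ j, MeasurableSet (B j) := by
    intro j
    refine (MeasurableSet.union ?_ hE2m).union measurableSet_Ioo.compl
    exact measurableSet_lt ((measurable_const.sub measurable_id).add_const _) measurable_const
  -- bound the volume of E2 inside (0, w)
  have hE2vol : volume (E2 ∩ Ioo 0 w) ≤ ENNReal.ofReal (δ * ind) := by
    by_cases h2 : 2 ≤ m
    · have hι : ind = 1 := by rw [hinddef, if_pos h2]
      set G : ℕ → Set ℝ := fun i =>
        (fun u : ℝ => θ + (i:ℝ)*w - u) ⁻¹' (A ∩ Ioo (θ + (i:ℝ)*w - w) (θ + (i:ℝ)*w)) with hGdef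
      have hsub : E2 ∩ Ioo 0 w ⊆ ⋃ i ∈ Finset.Icc 1 (m-1), G i := by
        rintro u ⟨hE, hu⟩
        rw [hE2def, Set.mem_iUnion₂] at hE
        obtain ⟨i, hi, hiu⟩ := hE
        obtain ⟨hu1, hu2⟩ := hu
        refine Set.mem_biUnion hi
          (show θ + (i:ℝ)*w - u ∈ A ∩ Ioo (θ + (i:ℝ)*w - w) (θ + (i:ℝ)*w) from
            ⟨hiu, Set.mem_Ioo.mpr ⟨by linarith, by linarith⟩⟩)
      have hGvol : ∀ i : ℕ, volume (G i)
          = volume (A ∩ Ioo (θ + (i:ℝ)*w - w) (θ + (i:ℝ)*w)) := by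
        intro i
        exact (Measure.measurePreserving_sub_left volume (θ + (i:ℝ)*w)).measure_preimage
          ((hAm.inter measurableSet_Ioo).nullMeasurableSet)
      have hdisj : (↑(Finset.Icc 1 (m-1)) : Set ℕ).PairwiseDisjoint
          (fun i : ℕ => A ∩ Ioo (θ + (i:ℝ)*w - w) (θ + (i:ℝ)*w)) := by
        have hlt : ∀ i i' : ℕ, i < i' →
            Disjoint (A ∩ Ioo (θ + (i:ℝ)*w - w) (θ + (i:ℝ)*w))
              (A ∩ Ioo (θ + (i':ℝ)*w - w) (θ + (i':ℝ)*w)) := by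
          intro i i' hii'
          rw [Set.disjoint_left]
          rintro x ⟨-, hx1⟩ ⟨-, hx2⟩
          have hc : (i:ℝ) + 1 ≤ (i':ℝ) := by exact_mod_cast hii'
          simp only [Set.mem_Ioo] at hx1 hx2
          nlinarith [hx1.2, hx2.1]
        intro i hi i' hi' hne
        rcases hne.lt_or_gt with h | h
        · exact hlt i i' h
        · exact (hlt i' i h).symm
      calc volume (E2 ∩ Ioo 0 w)
          ≤ ∑ i ∈ Finset.Icc 1 (m-1), volume (G i) :=
            (measure_mono hsub).trans (measure_biUnion_finset_le _ _)
        _ = ∑ i ∈ Finset.Icc 1 (m-1),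
              volume (A ∩ Ioo (θ + (i:ℝ)*w - w) (θ + (i:ℝ)*w)) :=
            Finset.sum_congr rfl (fun i _ => hGvol i)
        _ = volume (⋃ i ∈ Finset.Icc 1 (m-1),
              A ∩ Ioo (θ + (i:ℝ)*w - w) (θ + (i:ℝ)*w)) :=
            (measure_biUnion_finset hdisj
              (fun i _ => hAm.inter measurableSet_Ioo)).symm
        _ ≤ volume A := measure_mono (Set.iUnion₂_subset (fun i _ => inter_subset_left))
        _ = ENNReal.ofReal (δ * ind) := by rw [hvolA, hι, mul_one]
    · have hm1 : m = 1 := by omega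
      have : E2 = ∅ := by
        rw [hE2def, hm1]
        simp
      rw [this]
      simp
  -- volume computations for the main part
  set F : ℕ → Set ℝ := fun k => Ioo (0:ℝ) w ∩ {u : ℝ | θ - u + (k:ℝ)*w < b} with hFdef
  set I : ℕ → Set ℝ := fun k => Ioo ((k:ℝ)*w - w) (min ((k:ℝ)*w) (b-θ)) with hIdef
  have hFI : ∀ k : ℕ, volume (F k) = volume (I k) := by
    intro k
    have hFeq : F k = Ioo (max 0 (θ + (k:ℝ)*w - b)) w := by
      ext u
      simp only [hFdef, Set.mem_inter_iff, Set.mem_Ioo, Set.mem_setOf_eq, max_lt_iff]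
      constructor
      · rintro ⟨⟨h1, h2⟩, h3⟩; exact ⟨⟨h1, by linarith⟩, h2⟩
      · rintro ⟨⟨h1, h2⟩, h3⟩; exact ⟨⟨h1, h3⟩, by linarith⟩
    rw [hFeq, hIdef]
    simp only [Real.volume_Ioo]
    congr 1
    rcases le_total ((k:ℝ)*w) (b - θ) with h | h
    · rw [min_eq_left h, max_eq_left (by linarith)]
      ring
    · rw [min_eq_right h, max_eq_right (by linarith)]
      ring
  have hIsum : ∑ k ∈ Finset.Icc 1 m, volume (I k) ≤ ENNReal.ofReal (b - θ) := by
    have hdisj : (↑(Finset.Icc 1 m) : Set ℕ).PairwiseDisjoint I := by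
      have hlt : ∀ k k' : ℕ, k < k' → Disjoint (I k) (I k') := by
        intro k k' hkk'
        rw [Set.disjoint_left]
        rintro x hx1 hx2
        have hc : (k:ℝ) + 1 ≤ (k':ℝ) := by exact_mod_cast hkk'
        simp only [hIdef, Set.mem_Ioo, lt_min_iff] at hx1 hx2
        nlinarith [hx1.2.1, hx2.1]
      intro i hi i' hi' hne
      rcases hne.lt_or_gt with h | h
      · exact hlt i i' h
      · exact (hlt i' i h).symm
    rw [← measure_biUnion_finset hdisj (fun i _ => measurableSet_Ioo)]
    have hsub : (⋃ k ∈ Finset.Icc 1 m, I k) ⊆ Ioo 0 (b - θ) := by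
      intro x hx
      rw [Set.mem_iUnion₂] at hx
      obtain ⟨k, hk, hxk⟩ := hx
      simp only [hIdef, Set.mem_Ioo, lt_min_iff] at hxk
      simp only [Finset.mem_Icc] at hk
      have h1 : (1:ℝ) ≤ (k:ℝ) := by exact_mod_cast hk.1
      constructor
      · nlinarith [hxk.1]
      · exact hxk.2.2
    refine (measure_mono hsub).trans ?_
    rw [Real.volume_Ioo, sub_zero]
  -- probability of each J-fiber
  have hJone : ∀ j ∈ Finset.Icc 1 m, P (J ⁻¹' {j}) = (m : ℝ≥0∞)⁻¹ := by
    intro j hj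
    rw [← Measure.map_apply hJmeas (measurableSet_singleton j), hJ]
    rw [Measure.smul_apply, Measure.finset_sum_apply]
    have : ∀ j' ∈ Finset.Icc 1 m, Measure.dirac j' ({j} : Set ℕ)
        = if j' = j then 1 else 0 := by
      intro j' _
      rw [Measure.dirac_apply' _ (measurableSet_singleton j)]
      by_cases h : j' = j
      · simp [h]
      · simp [Set.indicator, h]
    rw [Finset.sum_congr rfl this, Finset.sum_ite_eq' _ j (fun _ => (1:ℝ≥0∞)), if_pos hj]
    simp [smul_eq_mul]
  have hJout : P (J ⁻¹' (↑(Finset.Icc 1 m) : Set ℕ)ᶜ) = 0 := by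
    have hms : MeasurableSet ((↑(Finset.Icc 1 m) : Set ℕ)ᶜ) :=
      (Set.to_countable _).measurableSet.compl
    rw [← Measure.map_apply hJmeas hms, hJ]
    rw [Measure.smul_apply, Measure.finset_sum_apply]
    have : ∀ j' ∈ Finset.Icc 1 m,
        Measure.dirac j' ((↑(Finset.Icc 1 m) : Set ℕ)ᶜ) = 0 := by
      intro j' hj'
      rw [Measure.dirac_apply' _ hms]
      have hj'' : j' ∈ (↑(Finset.Icc 1 m) : Set ℕ) := hj'
      simp only [Set.indicator, Set.mem_compl_iff, hj'', not_true_eq_false, if_false,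
        Pi.one_apply]
    rw [Finset.sum_congr rfl this]
    simp
  -- the pushforward of Υ
  have hmap : ∀ j, P (Υ ⁻¹' (B j)) = (ENNReal.ofReal w)⁻¹ * volume (B j ∩ Ioo 0 w) := by
    intro j
    rw [← Measure.map_apply hΥmeas (hBm j), hΥ, Measure.smul_apply,
      Measure.restrict_apply (hBm j), smul_eq_mul]
  -- covering
  have cover : {ω | Rstop S θ (Υ ω) w m (J ω) < b} ⊆
      (⋃ j ∈ Finset.Icc 1 m, (Υ ⁻¹' (B j) ∩ J ⁻¹' {j})) ∪
        J ⁻¹' (↑(Finset.Icc 1 m) : Set ℕ)ᶜ := by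
    intro ω hω
    by_cases hJω : J ω ∈ Finset.Icc 1 m
    · left
      refine Set.mem_biUnion hJω ⟨?_, rfl⟩
      by_cases hu : Υ ω ∈ Ioo 0 w
      · simp only [Finset.mem_Icc] at hJω
        rcases keyIncl hw hu hJω.1 hJω.2 hω with h | ⟨i, hi, hmem⟩
        · exact Or.inl (Or.inl h)
        · refine Or.inl (Or.inr ?_)
          rw [hE2def, Set.mem_iUnion₂]
          refine ⟨i, hi, ?_⟩
          show θ + (i:ℝ)*w - Υ ω ∈ A
          have : θ + (i:ℝ)*w - Υ ω = θ - Υ ω + (i:ℝ)*w := by ring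
          rw [this]
          exact hmem
      · exact Or.inr hu
    · right
      exact hJω
  -- independence and per-term bound
  have hprod : ∀ j, P (Υ ⁻¹' (B j) ∩ J ⁻¹' {j})
      = P (Υ ⁻¹' (B j)) * P (J ⁻¹' {j}) := fun j =>
    hindep.measure_inter_preimage_eq_mul _ _ (hBm j) (measurableSet_singleton j)
  have hterm : ∀ j ∈ Finset.Icc 1 m, P (Υ ⁻¹' (B j) ∩ J ⁻¹' {j})
      ≤ (ENNReal.ofReal w)⁻¹ * (m:ℝ≥0∞)⁻¹
          * (volume (F (m+1-j)) + ENNReal.ofReal (δ * ind)) := by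
    intro j hj
    rw [hprod j, hJone j hj, hmap j]
    have hBsub : B j ∩ Ioo 0 w ⊆ (F (m+1-j)) ∪ (E2 ∩ Ioo 0 w) := by
      rintro u ⟨hB, hu⟩
      rcases hB with (h1 | h2) | h3
      · exact Or.inl ⟨hu, h1⟩
      · exact Or.inr ⟨h2, hu⟩
      · exact absurd hu h3
    have hv : volume (B j ∩ Ioo 0 w) ≤ volume (F (m+1-j)) + ENNReal.ofReal (δ * ind) :=
      (measure_mono hBsub).trans ((measure_union_le _ _).trans
        (add_le_add_right hE2vol _))
    calc (ENNReal.ofReal w)⁻¹ * volume (B j ∩ Ioo 0 w) * (m:ℝ≥0∞)⁻¹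
        = (ENNReal.ofReal w)⁻¹ * (m:ℝ≥0∞)⁻¹ * volume (B j ∩ Ioo 0 w) := by ring
      _ ≤ (ENNReal.ofReal w)⁻¹ * (m:ℝ≥0∞)⁻¹
          * (volume (F (m+1-j)) + ENNReal.ofReal (δ * ind)) := mul_le_mul_right hv _
  -- reindexing the sum
  have hreindex : ∑ j ∈ Finset.Icc 1 m, volume (F (m+1-j))
      = ∑ k ∈ Finset.Icc 1 m, volume (F k) := by
    refine Finset.sum_nbij' (fun j => m + 1 - j) (fun k => m + 1 - k)
      ?_ ?_ ?_ ?_ ?_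
    · intro a ha; simp only [Finset.mem_Icc] at *; omega
    · intro a ha; simp only [Finset.mem_Icc] at *; omega
    · intro a ha; simp only [Finset.mem_Icc] at *; omega
    · intro a ha; simp only [Finset.mem_Icc] at *; omega
    · intro a ha; rfl
  -- assemble
  have key : P {ω | Rstop S θ (Υ ω) w m (J ω) < b}
      ≤ ENNReal.ofReal ((b - θ) / (m * w) + (δ / w) * ind) := by
    have step1 : P {ω | Rstop S θ (Υ ω) w m (J ω) < b}
        ≤ ∑ j ∈ Finset.Icc 1 m, P (Υ ⁻¹' (B j) ∩ J ⁻¹' {j}) := by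
      refine (measure_mono cover).trans ?_
      refine (measure_union_le _ _).trans ?_
      rw [hJout, add_zero]
      exact measure_biUnion_finset_le _ _
    have step2 : ∑ j ∈ Finset.Icc 1 m, P (Υ ⁻¹' (B j) ∩ J ⁻¹' {j})
        ≤ (ENNReal.ofReal w)⁻¹ * (m:ℝ≥0∞)⁻¹
            * (ENNReal.ofReal (b - θ) + m * ENNReal.ofReal (δ * ind)) := by
      refine (Finset.sum_le_sum hterm).trans ?_
      rw [← Finset.mul_sum, Finset.sum_add_distrib, Finset.sum_const, Nat.card_Icc,
        Nat.add_sub_cancel, nsmul_eq_mul, hreindex]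
      refine mul_le_mul_right (add_le_add_left ?_ _) _
      calc ∑ k ∈ Finset.Icc 1 m, volume (F k)
          = ∑ k ∈ Finset.Icc 1 m, volume (I k) :=
            Finset.sum_congr rfl (fun k _ => hFI k)
        _ ≤ ENNReal.ofReal (b - θ) := hIsum
    have hfinal : (ENNReal.ofReal w)⁻¹ * (m:ℝ≥0∞)⁻¹
        * (ENNReal.ofReal (b - θ) + m * ENNReal.ofReal (δ * ind))
        = ENNReal.ofReal ((b - θ) / (m * w) + (δ / w) * ind) := by
      have hw0 : ENNReal.ofReal w ≠ 0 := by
        simp [ENNReal.ofReal_eq_zero, not_le, hw]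
      rw [ENNReal.ofReal_add (div_nonneg (by linarith) (by positivity))
        (mul_nonneg (div_nonneg hδ0 hw.le) hind0)]
      rw [mul_add]
      congr 1
      · rw [ENNReal.ofReal_div_of_pos (by positivity), ENNReal.ofReal_mul hm0R.le,
          ENNReal.ofReal_natCast, ENNReal.div_eq_inv_mul,
          ENNReal.mul_inv (Or.inl hm0) (Or.inl hmtop)]
        ring
      · have : (δ / w) * ind = (δ * ind) / w := by ring
        rw [this, ENNReal.ofReal_div_of_pos hw, ENNReal.div_eq_inv_mul]
        calc (ENNReal.ofReal w)⁻¹ * (m:ℝ≥0∞)⁻¹ * ((m:ℝ≥0∞) * ENNReal.ofReal (δ * ind))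
            = ((m:ℝ≥0∞)⁻¹ * (m:ℝ≥0∞)) * ((ENNReal.ofReal w)⁻¹ * ENNReal.ofReal (δ * ind)) := by
              ring
          _ = (ENNReal.ofReal w)⁻¹ * ENNReal.ofReal (δ * ind) := by
              rw [ENNReal.inv_mul_cancel hm0 hmtop, one_mul]
    calc P {ω | Rstop S θ (Υ ω) w m (J ω) < b}
        ≤ _ := step1
      _ ≤ _ := step2
      _ = _ := hfinal
  refine ⟨key, ?_, h3⟩
  -- the complement bound
  set x : ℝ := (b - θ) / (m * w) + (δ / w) * ind with hxdef
  have hx0 : 0 ≤ x := by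
    rw [hxdef]
    have h1 : 0 ≤ (b - θ) / (m * w) := div_nonneg (by linarith) (by positivity)
    have h2 : 0 ≤ (δ / w) * ind := mul_nonneg (div_nonneg hδ0 hw.le) hind0
    linarith
  have hcompl : {ω | b ≤ Rstop S θ (Υ ω) w m (J ω)}
      = {ω | Rstop S θ (Υ ω) w m (J ω) < b}ᶜ := by
    ext ω; simp [not_lt]
  have hsum1 : (1:ℝ≥0∞) ≤ P {ω | Rstop S θ (Υ ω) w m (J ω) < b}
      + P {ω | b ≤ Rstop S θ (Υ ω) w m (J ω)} := by
    have huniv : (Set.univ : Set Ω) = {ω | Rstop S θ (Υ ω) w m (J ω) < b}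
        ∪ {ω | b ≤ Rstop S θ (Υ ω) w m (J ω)} := by
      ext ω; simp [lt_or_ge]
    calc (1:ℝ≥0∞) = P Set.univ := (measure_univ).symm
      _ = P ({ω | Rstop S θ (Υ ω) w m (J ω) < b}
          ∪ {ω | b ≤ Rstop S θ (Υ ω) w m (J ω)}) := by rw [← huniv]
      _ ≤ _ := measure_union_le _ _
  have : ENNReal.ofReal (1 - x) ≤ P {ω | b ≤ Rstop S θ (Υ ω) w m (J ω)} := by
    rw [ENNReal.ofReal_sub _ hx0, ENNReal.ofReal_one]
    rw [tsub_le_iff_right]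
    calc (1:ℝ≥0∞) ≤ P {ω | Rstop S θ (Υ ω) w m (J ω) < b}
        + P {ω | b ≤ Rstop S θ (Υ ω) w m (J ω)} := hsum1
      _ ≤ ENNReal.ofReal x + P {ω | b ≤ Rstop S θ (Υ ω) w m (J ω)} :=
          add_le_add_left key _
      _ = P {ω | b ≤ Rstop S θ (Υ ω) w m (J ω)} + ENNReal.ofReal x := add_comm _ _
  simpa [hxdef, sub_sub] using this
end

section
/- Suppose S is bounded above, so that T := inf{i ≥ 1 : R_i ∉ S} is finite for every outcome. Let θ ∈ S, let C ∈ (θ, ∞], set b := sup(S ∩ [θ, C)) and δ := Leb₁([θ, b) \ S). Then ℙ(R_T < b) ≤ δ/w. -/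
open MeasureTheory ProbabilityTheory Set
open scoped ENNReal

/-- The exit index `T := inf{i ≥ 1 : R_i ∉ S}`. -/
noncomputable def exitT (S : Set ℝ) (θ u w : ℝ) : ℕ :=
  sInf {i : ℕ | 1 ≤ i ∧ Rpt θ u w i ∉ S}

/-! On `{0 < Υ < w}` every stepping-out point `R_i` with `i ≥ 1` lies to the right of `θ`, and
`R_T ∉ S`; so `R_T < b` forces some `R_i` into `A := [θ, b) \ S`. For fixed `i`, `R_i` is uniform
on an interval of length `w`, and these intervals are pairwise disjoint, so the probabilities
`ℙ(R_i ∈ A)` add up to at most `Leb₁(A) / w`. -/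

open scoped Function

lemma volume_Ioo_inter_preimage_sub_left (A : Set ℝ) (a w : ℝ) :
    volume (Ioo 0 w ∩ (a - ·) ⁻¹' A) = volume (A ∩ Ioo (a - w) a) := by
  have hset : Ioo 0 w ∩ (a - ·) ⁻¹' A = (a - ·) ⁻¹' (A ∩ Ioo (a - w) a) := by
    ext u
    simp only [mem_inter_iff, mem_preimage, mem_Ioo]
    constructor
    · rintro ⟨⟨h0, hw⟩, hA⟩
      exact ⟨hA, by linarith, by linarith⟩
    · rintro ⟨hA, h1, h2⟩
      exact ⟨⟨by linarith, by linarith⟩, hA⟩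
  rw [hset]
  exact (Measure.measurePreserving_sub_left volume a).measure_preimage_equiv
    (f := MeasurableEquiv.subLeft a) _

lemma pairwise_disjoint_Ioo_sub_add_mul (c w : ℝ) :
    Pairwise (Disjoint on fun i : ℕ => Ioo (c + i * w - w) (c + i * w)) := by
  intro i j hij
  rw [Function.onFun, Set.disjoint_left]
  rintro x ⟨hi₁, hi₂⟩ ⟨hj₁, hj₂⟩
  rcases hij.lt_or_gt with h | h
  · have : (i : ℝ) + 1 ≤ j := by exact_mod_cast h
    nlinarith
  · have : (j : ℝ) + 1 ≤ i := by exact_mod_cast h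
    nlinarith

lemma measurableSet_exists_Rpt_mem {A : Set ℝ} (hA : MeasurableSet A) (c w : ℝ) :
    MeasurableSet {u | ∃ i : ℕ, Rpt c u w i ∈ A} := by
  rw [ofPred_exists]
  exact MeasurableSet.iUnion fun i => hA.preimage (by unfold Rpt; fun_prop)

lemma volume_Ioo_inter_exists_Rpt_mem_le {A : Set ℝ} (hA : MeasurableSet A) (c w : ℝ) :
    volume (Ioo 0 w ∩ {u | ∃ i : ℕ, Rpt c u w i ∈ A}) ≤ volume A := by
  have hpiece (i : ℕ) : volume (Ioo 0 w ∩ {u | Rpt c u w i ∈ A})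
      = volume (A ∩ Ioo (c + i * w - w) (c + i * w)) := by
    have : (Rpt c · w i) = (c + i * w - ·) := by funext u; simp only [Rpt]; ring
    rw [← volume_Ioo_inter_preimage_sub_left, ← this]
    rfl
  calc volume (Ioo 0 w ∩ {u | ∃ i : ℕ, Rpt c u w i ∈ A})
      ≤ ∑' i : ℕ, volume (Ioo 0 w ∩ {u | Rpt c u w i ∈ A}) := by
        rw [ofPred_exists, inter_iUnion]
        exact measure_iUnion_le _
    _ = volume (⋃ i : ℕ, A ∩ Ioo (c + i * w - w) (c + i * w)) := by
        rw [measure_iUnion (fun i j hij => (pairwise_disjoint_Ioo_sub_add_mul c w hij).mono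
          inter_subset_right inter_subset_right) fun _ => hA.inter measurableSet_Ioo]
        simp only [hpiece]
    _ ≤ volume A := measure_mono (iUnion_subset fun _ => inter_subset_left)

lemma le_Rpt {θ u w : ℝ} {i : ℕ} (hw : 0 ≤ w) (hu : u ≤ w) (hi : 1 ≤ i) : θ ≤ Rpt θ u w i := by
  have : w ≤ i * w := le_mul_of_one_le_left hw (by exact_mod_cast hi)
  unfold Rpt
  linarith

lemma exitT_spec {S : Set ℝ} {w : ℝ} (hw : 0 < w) (hS : BddAbove S) (θ u : ℝ) :
    1 ≤ exitT S θ u w ∧ Rpt θ u w (exitT S θ u w) ∉ S := by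
  obtain ⟨M, hM⟩ := hS
  obtain ⟨n, hn⟩ := exists_nat_gt ((M - θ + u) / w)
  have hne : {i : ℕ | 1 ≤ i ∧ Rpt θ u w i ∉ S}.Nonempty := by
    refine ⟨n + 1, Nat.le_add_left 1 n, fun hmem => (hM hmem).not_gt ?_⟩
    rw [div_lt_iff₀ hw] at hn
    simp only [Rpt, Nat.cast_add, Nat.cast_one]
    linarith
  exact Nat.sInf_mem hne

lemma Rpt_exitT_mem_Ico_diff {S : Set ℝ} {θ u w b : ℝ} (hw : 0 < w) (hS : BddAbove S)
    (hu : u ≤ w) (hb : Rpt θ u w (exitT S θ u w) < b) :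
    Rpt θ u w (exitT S θ u w) ∈ Ico θ b \ S :=
  ⟨⟨le_Rpt hw.le hu (exitT_spec hw hS θ u).1, hb⟩, (exitT_spec hw hS θ u).2⟩

theorem stmt2_general {Ω : Type*} [MeasurableSpace Ω] (P : Measure Ω)
    (w : ℝ) (hw : 0 < w) (S : Set ℝ) (hSmeas : MeasurableSet S) (hSb : BddAbove S)
    (Υ : Ω → ℝ)
    (hΥ : Measure.map Υ P = (ENNReal.ofReal w)⁻¹ • volume.restrict (Ioo 0 w))
    (θ : ℝ)
    (b : ℝ)
    (δ : ℝ) (hδ : δ = (volume (Ico θ b \ S)).toReal) :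
    P {ω | Rpt θ (Υ ω) w (exitT S θ (Υ ω) w) < b} ≤ ENNReal.ofReal (δ / w) := by
  have hunif : pdf.IsUniform Υ (Ioo 0 w) P := by
    rwa [pdf.IsUniform, ProbabilityTheory.cond, Real.volume_Ioo, sub_zero]
  set A := Ico θ b \ S
  have hA : MeasurableSet A := measurableSet_Ico.diff hSmeas
  set L := {u | ∃ i : ℕ, Rpt θ u w i ∈ A}
  have hL : MeasurableSet (L ∪ (Ioo 0 w)ᶜ) :=
    (measurableSet_exists_Rpt_mem hA θ w).union measurableSet_Ioo.compl
  have hsub : {ω | Rpt θ (Υ ω) w (exitT S θ (Υ ω) w) < b} ⊆ Υ ⁻¹' (L ∪ (Ioo 0 w)ᶜ) := by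
    intro ω hω
    by_cases hu : Υ ω ∈ Ioo 0 w
    · exact Or.inl ⟨_, Rpt_exitT_mem_Ico_diff hw hSb hu.2.le hω⟩
    · exact Or.inr hu
  calc P {ω | Rpt θ (Υ ω) w (exitT S θ (Υ ω) w) < b}
      ≤ P (Υ ⁻¹' (L ∪ (Ioo 0 w)ᶜ)) := measure_mono hsub
    _ = volume (Ioo 0 w ∩ L) / ENNReal.ofReal w := by
        rw [hunif.measure_preimage (by simp [hw]) (by simp) hL,
          inter_union_distrib_left, inter_compl_self, union_empty, Real.volume_Ioo, sub_zero]
    _ ≤ volume A / ENNReal.ofReal w :=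
        ENNReal.div_le_div_right (volume_Ioo_inter_exists_Rpt_mem_le hA θ w) _
    _ = ENNReal.ofReal (δ / w) := by
        rw [hδ, ENNReal.ofReal_div_of_pos hw, ENNReal.ofReal_toReal
          ((measure_mono sdiff_subset).trans_lt measure_Ico_lt_top).ne]

/-- If `S` is bounded above (so that `T` is finite for every outcome), `θ ∈ S`,
`C ∈ (θ, ∞]`, `b := sup(S ∩ [θ, C))` and `δ := Leb₁([θ, b) \ S)`, then
`ℙ(R_T < b) ≤ δ/w`. -/
theorem stmt2 {Ω : Type*} [MeasurableSpace Ω] (P : Measure Ω) [IsProbabilityMeasure P]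
    (w : ℝ) (hw : 0 < w) (S : Set ℝ) (hSmeas : MeasurableSet S) (hSb : BddAbove S)
    (Υ : Ω → ℝ) (hΥmeas : Measurable Υ)
    (hΥ : Measure.map Υ P = (ENNReal.ofReal w)⁻¹ • volume.restrict (Ioo 0 w))
    (θ : ℝ) (hθ : θ ∈ S) (C : EReal) (hC : (θ : EReal) < C)
    (b : ℝ) (hb : b = sSup (S ∩ {x : ℝ | θ ≤ x ∧ (x : EReal) < C}))
    (δ : ℝ) (hδ : δ = (volume (Ico θ b \ S)).toReal) :
    P {ω | Rpt θ (Υ ω) w (exitT S θ (Υ ω) w) < b} ≤ ENNReal.ofReal (δ / w) :=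
  stmt2_general P w hw S hSmeas hSb Υ hΥ θ b δ hδ
end

section
/- Let D > 0, Δ ≥ 0 and λ > 4D. Then for all integers m ≥ 1 and all reals w > 0, one has (1 − D/(m·w) − (Δ/w)·𝟙[m ≥ 2]) / min(m·w, λ) ≤ 1/(4D), with equality at m = 1 and w = 2D; moreover (1 − Δ/w)/λ < 1/(4D) for all w > 0 (the value corresponding to hyperparameter m = ∞). -/
/-- For `λ > 4·diam(W)` the global maximum of the hyperparameter-dependent factor
`q(m, w) = (1 − D/(m·w) − (Δ/w)·𝟙[m ≥ 2])/min(m·w, λ)` lies at `m = 1`, `w = 2·diam(W)`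
with value `1/(4·diam(W))`; moreover the value `(1 − Δ/w)/λ` corresponding to
hyperparameter `m = ∞` is strictly below `1/(4D)` for all `w > 0`. -/
theorem stmt13 (D Δ lam : ℝ) (hD : 0 < D) (hΔ : 0 ≤ Δ) (hlam : 4 * D < lam) :
    (∀ m : ℕ, 1 ≤ m → ∀ w : ℝ, 0 < w →
      (1 - D / (m * w) - (Δ / w) * (if 2 ≤ m then 1 else 0)) / min (m * w) lam
        ≤ 1 / (4 * D)) ∧
    (1 - D / (2 * D)) / min (2 * D) lam = 1 / (4 * D) ∧
    (∀ w : ℝ, 0 < w → (1 - Δ / w) / lam < 1 / (4 * D)) := by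
  have hlam0 : 0 < lam := by linarith
  refine ⟨?_, ?_, ?_⟩
  · intro m hm w hw
    have hmpos : (0:ℝ) < (m:ℝ) := by exact_mod_cast Nat.lt_of_lt_of_le Nat.zero_lt_one hm
    set t : ℝ := (m:ℝ) * w with ht
    have ht0 : 0 < t := mul_pos hmpos hw
    have he : 0 ≤ (Δ / w) * (if 2 ≤ m then 1 else 0) := by
      apply mul_nonneg (div_nonneg hΔ hw.le)
      split <;> norm_num
    have hmin : 0 < min t lam := lt_min ht0 hlam0
    rw [div_le_div_iff₀ hmin (by positivity)]
    have hnum : 1 - D / t - (Δ / w) * (if 2 ≤ m then 1 else 0) ≤ 1 - D / t := by linarith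
    rcases min_cases t lam with ⟨hmeq, hle⟩ | ⟨hmeq, hle⟩
    · rw [hmeq]
      have key : (1 - D / t) * (4 * D) ≤ 1 * t := by
        have h1 : (1 - D / t) * (4 * D) * t ≤ 1 * t * t := by
          have expand : (1 - D / t) * (4 * D) * t = 4 * D * t - 4 * D * D := by
            field_simp
          rw [expand]
          nlinarith [sq_nonneg (t - 2 * D)]
        have := le_of_mul_le_mul_right h1 ht0
        linarith
      calc (1 - D / t - (Δ / w) * (if 2 ≤ m then 1 else 0)) * (4 * D)
          ≤ (1 - D / t) * (4 * D) := by nlinarith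
        _ ≤ 1 * t := key
    · rw [hmeq]
      have hDt : 0 ≤ D / t := div_nonneg hD.le ht0.le
      have : (1 - D / t - (Δ / w) * (if 2 ≤ m then 1 else 0)) * (4 * D) ≤ 1 * (4 * D) := by
        nlinarith
      calc (1 - D / t - (Δ / w) * (if 2 ≤ m then 1 else 0)) * (4 * D)
          ≤ 1 * (4 * D) := this
        _ ≤ 1 * lam := by linarith
  · have h2D : (2 : ℝ) * D < lam := by linarith
    rw [min_eq_left h2D.le]
    rw [div_eq_div_iff (by positivity) (by positivity)]
    field_simp
    ring
  · intro w hw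
    have hDw : 0 ≤ Δ / w := div_nonneg hΔ hw.le
    rw [div_lt_div_iff₀ hlam0 (by positivity)]
    nlinarith
end
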